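/- With the notation above, the restriction Q_{+1} of Q(α,β) to H_{+1} is unitarily equivalent to the Jacobi operator Q̂_{+1} on ℓ²(ℕ) with diagonal entries (1/2)b_{+1}(n), where b_{+1}(n) = α(1+4n) for even n and β(1+4n) for odd n, and off-diagonal entries (1/2)a_+(n) with a_+(n) = −√((2n+1)(2n+2)). -/

import Mathlib

open MeasureTheory

noncomputable def ket (n : ℕ) : ℝ → ℂ := fun x =>
  (((Polynomial.aeval (Real.sqrt 2 * x)) (Polynomial.hermite n) : ℝ) *
    Real.exp (-(x ^ 2) / 2) : ℝ)

noncomputable def Qact (α β : ℝ) (u : (ℝ → ℂ) × (ℝ → ℂ)) : (ℝ → ℂ) × (ℝ → ℂ) :=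
  (fun x => (α : ℂ) * (-(1/2) * deriv (deriv u.1) x + (1/2) * (x : ℂ) ^ 2 * u.1 x)
      - ((x : ℂ) * deriv u.2 x + (1/2) * u.2 x),
   fun x => (β : ℂ) * (-(1/2) * deriv (deriv u.2) x + (1/2) * (x : ℂ) ^ 2 * u.2 x)
      + ((x : ℂ) * deriv u.1 x + (1/2) * u.1 x))

/-- Generating set of the subspace `H_{+1}`. -/
noncomputable def SplusOne : Set ((ℝ → ℂ) × (ℝ → ℂ)) :=
  {f | ∃ n : ℕ, f = (ket (4 * n), 0) ∨ f = (0, ket (4 * n + 2))}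

/-- Off-diagonal entries `a_+(n) = -√((2n+1)(2n+2))`. -/
noncomputable def aPlus (n : ℕ) : ℝ := -Real.sqrt ((2 * n + 1) * (2 * n + 2))

/-- Diagonal entries `b_{+1}(n)`: `α(1+4n)` for even `n`, `β(1+4n)` for odd `n`. -/
noncomputable def bPlusOne (α β : ℝ) (n : ℕ) : ℝ :=
  if Even n then α * (1 + 4 * n) else β * (1 + 4 * n)

/-!
Write `|n⟩ = ket n = Heₙ(√2 x) e^{-x²/2}`. With `a = (x + d/dx)/√2` one has `a* |n⟩ = |n+1⟩`
and `a |n⟩ = n |n-1⟩`, so integration by parts gives `⟨m|n⟩ = δₘₙ n! √π`. The operator `Q(α,β)`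
is built from the harmonic oscillator `H = -½ d²/dx² + ½ x² = a*a + ½` on the diagonal and the
dilation generator `D = x d/dx + ½ = ½ (a² - a*²)` off it, so `H |m⟩ = (m + ½) |m⟩` and
`D |m⟩ = ½ m (m-1) |m-2⟩ - ½ |m+2⟩`. Hence on the vectors `e₂ₙ = (|4n⟩, 0)`,
`e₂ₙ₊₁ = (0, |4n+2⟩)` spanning `H_{+1}`, `Q` is tridiagonal; normalizing and choosing the
signs `(-1)^⌊k/2⌋` turns the off-diagonal entries into `a_+(k)/2`.
-/

open Polynomial Real

namespace Polynomial

theorem derivative_hermite_succ (n : ℕ) :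
    derivative (hermite (n + 1)) = (n + 1 : ℤ[X]) * hermite n := by
  induction n with
  | zero => simp
  | succ n ih =>
    rw [hermite_succ (n + 1), derivative_sub, derivative_mul, derivative_X, one_mul, ih,
      derivative_mul]
    simp only [derivative_add, derivative_natCast, derivative_one, zero_mul, zero_add,
      Nat.cast_add, Nat.cast_one]
    linear_combination (-(n + 1 : ℤ[X])) * hermite_succ n

theorem derivative_hermite (n : ℕ) : derivative (hermite n) = (n : ℤ[X]) * hermite (n - 1) := by
  cases n with
  | zero => simp
  | succ n => simpa using derivative_hermite_succ n

end Polynomial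

theorem integrable_aeval_mul_exp_neg_mul_sq {R : Type*} [CommSemiring R] [Algebra R ℝ]
    {b : ℝ} (hb : 0 < b) (p : R[X]) :
    Integrable fun x : ℝ => aeval x p * Real.exp (-b * x ^ 2) := by
  simp_rw [aeval_eq_sum_range, Finset.sum_mul, Algebra.smul_def, mul_assoc]
  refine integrable_finsetSum _ fun i _ => Integrable.const_mul ?_ _
  simpa [Real.rpow_natCast] using
    integrable_rpow_mul_exp_neg_mul_sq hb (neg_one_lt_zero.trans_le (Nat.cast_nonneg i))

theorem Submodule.span_range_smul_of_isUnit {R M ι : Type*} [Semiring R] [AddCommMonoid M]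
    [Module R M] {c : ι → R} (hc : ∀ i, IsUnit (c i)) (v : ι → M) :
    Submodule.span R (Set.range fun i => c i • v i) = Submodule.span R (Set.range v) := by
  simp_rw [Submodule.span_range_eq_iSup, Submodule.span_singleton_smul_eq (hc _)]

theorem ofReal_sqrt_two_mul_self : (√2 : ℂ) * √2 = 2 := by
  rw [← Complex.ofReal_mul, Real.mul_self_sqrt zero_le_two]; norm_num

theorem ket_eq_ofReal (n : ℕ) (x : ℝ) :
    ket n x = ((aeval (√2 * x) (hermite n) * Real.exp (-x ^ 2 / 2) : ℝ) : ℂ) :=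
  rfl

theorem ket_succ (n : ℕ) (x : ℝ) :
    ket (n + 1) x = √2 * x * ket n x - n * ket (n - 1) x := by
  simp only [ket_eq_ofReal, hermite_succ, derivative_hermite, map_sub, map_mul, aeval_X,
    map_natCast]
  push_cast
  ring

theorem hasDerivAt_ket (n : ℕ) (x : ℝ) :
    HasDerivAt (ket n) (√2 * n * ket (n - 1) x - x * ket n x) x := by
  have hpoly : HasDerivAt (fun x : ℝ => aeval (√2 * x) (hermite n))
      (aeval (√2 * x) (derivative (hermite n)) * √2) x :=
    ((hermite n).hasDerivAt_aeval _).comp x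
      ((hasDerivAt_id x).const_mul √2 |>.congr_deriv (mul_one _))
  have hgauss : HasDerivAt (fun x : ℝ => Real.exp (-x ^ 2 / 2))
      (Real.exp (-x ^ 2 / 2) * -x) x :=
    ((hasDerivAt_pow 2 x).fun_neg.div_const 2).exp.congr_deriv (by ring)
  refine ((hpoly.mul hgauss).ofReal_comp.congr_of_eventuallyEq
    (.of_forall fun y => ket_eq_ofReal n y)).congr_deriv ?_
  simp only [ket_eq_ofReal, derivative_hermite, map_mul, map_natCast]
  push_cast
  ring

theorem deriv_ket (n : ℕ) : deriv (ket n) = fun x => √2 * n * ket (n - 1) x - x * ket n x :=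
  funext fun x => (hasDerivAt_ket n x).deriv

theorem deriv_deriv_ket (n : ℕ) (x : ℝ) :
    deriv (deriv (ket n)) x
      = √2 * n * deriv (ket (n - 1)) x - (ket n x + x * deriv (ket n) x) := by
  rw [deriv_ket]
  exact (((hasDerivAt_ket (n - 1) x).const_mul _).sub
    ((hasDerivAt_id x).ofReal_comp.mul (hasDerivAt_ket n x))).deriv.trans (by simp [deriv_ket])

theorem ket_mul_ket (m n : ℕ) (x : ℝ) :
    ket m x * ket n x
      = ((aeval (√2 * x) (hermite m * hermite n) * Real.exp (-x ^ 2) : ℝ) : ℂ) := by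
  have h : Real.exp (-x ^ 2 / 2) * Real.exp (-x ^ 2 / 2) = Real.exp (-x ^ 2) := by
    rw [← Real.exp_add]; ring_nf
  rw [ket_eq_ofReal, ket_eq_ofReal, map_mul, ← h]
  push_cast
  ring

theorem integrable_ket_mul_ket (m n : ℕ) : Integrable fun x => ket m x * ket n x := by
  have h := (integrable_aeval_mul_exp_neg_mul_sq (by norm_num : (0 : ℝ) < 1 / 2)
    (hermite m * hermite n)).comp_mul_left' (by positivity : √2 ≠ 0)
  have e (x : ℝ) : -(1 / 2) * (√2 * x) ^ 2 = -x ^ 2 := by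
    rw [mul_pow, Real.sq_sqrt zero_le_two]; ring
  simp_rw [e] at h
  simp_rw [ket_mul_ket]
  exact_mod_cast h.ofReal (𝕜 := ℂ)

theorem hasDerivAt_ket_mul_ket (m n : ℕ) (x : ℝ) :
    HasDerivAt (fun x => ket m x * ket n x)
      (√2 * (m * (ket (m - 1) x * ket n x) - ket m x * ket (n + 1) x)) x := by
  refine ((hasDerivAt_ket m x).mul (hasDerivAt_ket n x)).congr_deriv ?_
  rw [ket_succ]
  linear_combination ((x : ℂ) * ket m x * ket n x) * ofReal_sqrt_two_mul_self

theorem integral_ket_mul_ket_succ (m n : ℕ) :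
    ∫ x, ket m x * ket (n + 1) x = m * ∫ x, ket (m - 1) x * ket n x := by
  have hI := integrable_ket_mul_ket
  have h := integral_eq_zero_of_hasDerivAt_of_integrable (hasDerivAt_ket_mul_ket m n)
    ((((hI _ _).const_mul _).sub (hI _ _)).const_mul _) (hI m n)
  rw [integral_const_mul, integral_sub ((hI _ _).const_mul _) (hI _ _), integral_const_mul,
    mul_eq_zero, sub_eq_zero] at h
  exact (h.resolve_left (Complex.ofReal_ne_zero.2 (by positivity))).symm

theorem integral_ket_zero_mul_ket_zero : ∫ x, ket 0 x * ket 0 x = √π := by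
  simp_rw [ket_mul_ket]
  rw [integral_complex_ofReal]
  simpa using congrArg (fun r : ℝ => (r : ℂ)) (integral_gaussian 1)

theorem integral_ket_mul_ket (m n : ℕ) :
    ∫ x, ket m x * ket n x = if m = n then ((n.factorial * √π : ℝ) : ℂ) else 0 := by
  induction n generalizing m with
  | zero =>
    cases m with
    | zero => simpa using integral_ket_zero_mul_ket_zero
    | succ m => simp_rw [mul_comm (ket (m + 1) _), integral_ket_mul_ket_succ]; simp
  | succ n ih =>
    cases m with
    | zero => simp [integral_ket_mul_ket_succ]
    | succ m =>
      rw [integral_ket_mul_ket_succ, Nat.add_sub_cancel, ih]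
      simp only [Nat.add_right_cancel_iff]
      split_ifs with h
      · push_cast [h, Nat.factorial_succ]; ring
      · simp

noncomputable def harmonicOscillator (f : ℝ → ℂ) : ℝ → ℂ :=
  fun x => -(1 / 2) * deriv (deriv f) x + 1 / 2 * (x : ℂ) ^ 2 * f x

noncomputable def dilationGenerator (f : ℝ → ℂ) : ℝ → ℂ :=
  fun x => (x : ℂ) * deriv f x + 1 / 2 * f x

theorem harmonicOscillator_ket (n : ℕ) :
    harmonicOscillator (ket n) = ((n : ℂ) + 1 / 2) • ket n := by
  funext x
  simp only [harmonicOscillator, deriv_deriv_ket, Pi.smul_apply, smul_eq_mul]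
  simp only [deriv_ket]
  cases n with
  | zero => simp only [Nat.cast_zero]; ring
  | succ m =>
    simp only [Nat.add_sub_cancel, ket_succ m x]
    push_cast
    linear_combination (-(m + 1) * m / 2 * ket (m - 1) x) * ofReal_sqrt_two_mul_self

theorem dilationGenerator_ket (n : ℕ) :
    dilationGenerator (ket n)
      = ((n : ℂ) * (n - 1) / 2) • ket (n - 2) - (1 / 2 : ℂ) • ket (n + 2) := by
  funext x
  simp only [dilationGenerator, deriv_ket, Pi.sub_apply, Pi.smul_apply, smul_eq_mul]
  rw [ket_succ (n + 1), ket_succ n]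
  cases n with
  | zero =>
    simp only [Nat.cast_zero, Nat.cast_one, zero_add, Nat.sub_self]
    linear_combination (x : ℂ) ^ 2 * ket 0 x / 2 * ofReal_sqrt_two_mul_self
  | succ m =>
    simp only [Nat.add_sub_cancel, show m + 1 - 2 = m - 1 by omega, ket_succ m x]
    push_cast
    linear_combination
      ((x : ℂ) ^ 3 * √2 * ket m x / 2 - (x : ℂ) ^ 2 * m * ket (m - 1) x / 2)
        * ofReal_sqrt_two_mul_self

theorem Qact_smul (α β : ℝ) (c : ℂ) (u : (ℝ → ℂ) × (ℝ → ℂ)) :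
    Qact α β (c • u) = c • Qact α β u := by
  have hd (f : ℝ → ℂ) : deriv (c • f) = c • deriv f :=
    funext fun _ => deriv_const_smul_field c f
  ext x <;> simp only [Qact, Prod.smul_fst, Prod.smul_snd, hd, Pi.smul_apply, smul_eq_mul] <;> ring

theorem Qact_mk_zero (α β : ℝ) (f : ℝ → ℂ) :
    Qact α β (f, 0) = ((α : ℂ) • harmonicOscillator f, dilationGenerator f) := by
  ext x <;> simp [Qact, harmonicOscillator, dilationGenerator]

theorem Qact_zero_mk (α β : ℝ) (f : ℝ → ℂ) :
    Qact α β (0, f) = (-dilationGenerator f, (β : ℂ) • harmonicOscillator f) := by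
  ext x <;> simp [Qact, harmonicOscillator, dilationGenerator]

theorem Qact_ket_mk_zero (α β : ℝ) (m : ℕ) :
    Qact α β (ket m, 0) = ((α : ℂ) * (m + 1 / 2)) • (ket m, 0)
      + ((m : ℂ) * (m - 1) / 2) • (0, ket (m - 2)) - (1 / 2 : ℂ) • (0, ket (m + 2)) := by
  rw [Qact_mk_zero, harmonicOscillator_ket, dilationGenerator_ket]
  ext1 <;> simp only [Prod.fst_add, Prod.fst_sub, Prod.smul_fst, Prod.snd_add, Prod.snd_sub,
    Prod.smul_snd, smul_zero] <;> module

theorem Qact_zero_mk_ket (α β : ℝ) (m : ℕ) :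
    Qact α β (0, ket m) = -((m : ℂ) * (m - 1) / 2) • (ket (m - 2), 0)
      + ((β : ℂ) * (m + 1 / 2)) • (0, ket m) + (1 / 2 : ℂ) • (ket (m + 2), 0) := by
  rw [Qact_zero_mk, harmonicOscillator_ket, dilationGenerator_ket]
  ext1 <;> simp only [Prod.fst_add, Prod.smul_fst, Prod.snd_add, Prod.smul_snd, smul_zero] <;>
    module

noncomputable def plusOneKet (k : ℕ) : (ℝ → ℂ) × (ℝ → ℂ) :=
  if Even k then (ket (2 * k), 0) else (0, ket (2 * k))

theorem plusOneKet_two_mul (t : ℕ) : plusOneKet (2 * t) = (ket (4 * t), 0) := by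
  simp [plusOneKet, ← mul_assoc]

theorem plusOneKet_two_mul_add_one (t : ℕ) :
    plusOneKet (2 * t + 1) = (0, ket (4 * t + 2)) := by
  simp [plusOneKet, mul_add, ← mul_assoc]

theorem SplusOne_eq_range_plusOneKet : SplusOne = Set.range plusOneKet := by
  ext u
  constructor
  · rintro ⟨n, rfl | rfl⟩
    · exact ⟨2 * n, plusOneKet_two_mul n⟩
    · exact ⟨2 * n + 1, plusOneKet_two_mul_add_one n⟩
  · rintro ⟨k, rfl⟩
    obtain ⟨t, rfl | rfl⟩ := Nat.even_or_odd' k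
    · exact ⟨t, Or.inl (plusOneKet_two_mul t)⟩
    · exact ⟨t, Or.inr (plusOneKet_two_mul_add_one t)⟩

theorem Qact_plusOneKet_zero (α β : ℝ) :
    Qact α β (plusOneKet 0) = ((bPlusOne α β 0 / 2 : ℝ) : ℂ) • plusOneKet 0
      - (1 / 2 : ℂ) • plusOneKet 1 := by
  rw [show plusOneKet 0 = (ket 0, 0) by simp [plusOneKet],
    show plusOneKet 1 = (0, ket 2) by simp [plusOneKet], Qact_ket_mk_zero, bPlusOne,
    if_pos ⟨0, rfl⟩]
  simp only [Nat.cast_zero, zero_add]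
  module

theorem Qact_plusOneKet_succ (α β : ℝ) (k : ℕ) :
    Qact α β (plusOneKet (k + 1))
      = ((-1) ^ (k + 1) * ((2 * k + 1) * (2 * k + 2) / 2) : ℂ) • plusOneKet k
        + ((bPlusOne α β (k + 1) / 2 : ℝ) : ℂ) • plusOneKet (k + 1)
        - ((-1) ^ (k + 1) / 2 : ℂ) • plusOneKet (k + 2) := by
  obtain ⟨t, rfl | rfl⟩ := Nat.even_or_odd' k
  · rw [plusOneKet_two_mul_add_one, plusOneKet_two_mul, show 2 * t + 2 = 2 * (t + 1) by ring,
      plusOneKet_two_mul, Qact_zero_mk_ket, show 4 * t + 2 - 2 = 4 * t by omega,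
      show 4 * t + 2 + 2 = 4 * (t + 1) by ring, bPlusOne, if_neg (by simp)]
    simp only [pow_succ, pow_mul]
    push_cast
    module
  · rw [show 2 * t + 1 + 1 = 2 * (t + 1) by ring, plusOneKet_two_mul, plusOneKet_two_mul_add_one,
      show 2 * t + 1 + 2 = 2 * (t + 1) + 1 by ring, plusOneKet_two_mul_add_one, Qact_ket_mk_zero,
      show 4 * (t + 1) - 2 = 4 * t + 2 by omega, bPlusOne, if_pos (by simp)]
    simp only [pow_succ, pow_mul]
    push_cast
    module

theorem neg_one_pow_succ_div_two (k : ℕ) :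
    (-1 : ℝ) ^ ((k + 1) / 2) = (-1) ^ k * (-1) ^ (k / 2) := by
  obtain ⟨t, rfl | rfl⟩ := Nat.even_or_odd' k
  · rw [show (2 * t + 1) / 2 = t by omega, show 2 * t / 2 = t by omega]
    simp [pow_mul]
  · rw [show (2 * t + 1 + 1) / 2 = t + 1 by omega, show (2 * t + 1) / 2 = t by omega]
    simp [pow_succ, pow_mul]

theorem aPlus_sq (k : ℕ) : aPlus k ^ 2 = (2 * k + 1) * (2 * k + 2) := by
  rw [aPlus, neg_sq, Real.sq_sqrt (by positivity)]

noncomputable def plusOneCoeff (k : ℕ) : ℝ := (-1) ^ (k / 2) / √((2 * k).factorial * √π)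

theorem plusOneCoeff_mul_self_mul (k : ℕ) :
    plusOneCoeff k * plusOneCoeff k * ((2 * k).factorial * √π) = 1 := by
  have hpos : (0 : ℝ) < (2 * k).factorial * √π := by positivity
  rw [plusOneCoeff, div_mul_div_comm, Real.mul_self_sqrt hpos.le, ← mul_pow, neg_one_mul,
    neg_neg, one_pow, one_div_mul_cancel hpos.ne']

theorem neg_one_pow_mul_aPlus_mul_plusOneCoeff_succ (k : ℕ) :
    (-1) ^ (k + 1) * aPlus k * plusOneCoeff (k + 1) = plusOneCoeff k := by
  have hfac : ((2 * (k + 1)).factorial : ℝ) * √π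
      = ((2 * k + 1) * (2 * k + 2)) * ((2 * k).factorial * √π) := by
    rw [show 2 * (k + 1) = 2 * k + 1 + 1 by ring, Nat.factorial_succ, Nat.factorial_succ]
    push_cast; ring
  have hsign : ((-1 : ℝ) ^ k) ^ 2 = 1 := by rw [← pow_mul, mul_comm, pow_mul]; simp
  have ha : √((2 * k + 1) * (2 * k + 2) : ℝ) ≠ 0 := by positivity
  have hs : √((2 * k).factorial * √π : ℝ) ≠ 0 := by positivity
  rw [plusOneCoeff, plusOneCoeff, hfac, Real.sqrt_mul (by positivity), aPlus,
    neg_one_pow_succ_div_two]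
  field_simp
  linear_combination hsign

noncomputable def plusOneBasis (k : ℕ) : (ℝ → ℂ) × (ℝ → ℂ) :=
  (plusOneCoeff k : ℂ) • plusOneKet k

theorem span_range_plusOneBasis :
    Submodule.span ℂ (Set.range plusOneBasis) = Submodule.span ℂ SplusOne := by
  rw [SplusOne_eq_range_plusOneKet]
  refine Submodule.span_range_smul_of_isUnit (fun k => ?_) plusOneKet
  exact isUnit_iff_ne_zero.2 (Complex.ofReal_ne_zero.2 (div_ne_zero (by simp) (by positivity)))

theorem integral_plusOneKet (j k : ℕ) :
    ∫ x, starRingEnd ℂ ((plusOneKet j).1 x) * (plusOneKet k).1 x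
        + starRingEnd ℂ ((plusOneKet j).2 x) * (plusOneKet k).2 x
      = if j = k then (((2 * k).factorial * √π : ℝ) : ℂ) else 0 := by
  have hconj (n : ℕ) (x : ℝ) : starRingEnd ℂ (ket n x) = ket n x := by
    rw [ket_eq_ofReal, Complex.conj_ofReal]
  obtain ⟨s, rfl | rfl⟩ := Nat.even_or_odd' j <;> obtain ⟨t, rfl | rfl⟩ := Nat.even_or_odd' k <;>
    simp only [plusOneKet_two_mul, plusOneKet_two_mul_add_one, Pi.zero_apply, map_zero, hconj,
      mul_zero, zero_mul, add_zero, zero_add, integral_ket_mul_ket, integral_zero]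
  · simp [show 4 * t = 2 * (2 * t) by ring, show 4 * s = 2 * (2 * t) ↔ s = t by omega]
  · exact (if_neg (by omega)).symm
  · exact (if_neg (by omega)).symm
  · simp [show 4 * t + 2 = 2 * (2 * t + 1) by ring,
      show 4 * s + 2 = 2 * (2 * t + 1) ↔ s = t by omega]

theorem integral_plusOneBasis (j k : ℕ) :
    ∫ x, starRingEnd ℂ ((plusOneBasis j).1 x) * (plusOneBasis k).1 x
        + starRingEnd ℂ ((plusOneBasis j).2 x) * (plusOneBasis k).2 x
      = if j = k then 1 else 0 := by
  have h (x : ℝ) : starRingEnd ℂ ((plusOneBasis j).1 x) * (plusOneBasis k).1 x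
        + starRingEnd ℂ ((plusOneBasis j).2 x) * (plusOneBasis k).2 x
      = (plusOneCoeff j * plusOneCoeff k : ℂ) * (starRingEnd ℂ ((plusOneKet j).1 x)
        * (plusOneKet k).1 x + starRingEnd ℂ ((plusOneKet j).2 x) * (plusOneKet k).2 x) := by
    simp only [plusOneBasis, Prod.smul_fst, Prod.smul_snd, Pi.smul_apply, smul_eq_mul, map_mul,
      Complex.conj_ofReal]
    ring
  simp_rw [h]
  rw [integral_const_mul, integral_plusOneKet]
  split_ifs with hjk
  · subst hjk
    exact_mod_cast plusOneCoeff_mul_self_mul j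
  · simp

theorem Qact_plusOneBasis_zero (α β : ℝ) :
    Qact α β (plusOneBasis 0) = ((bPlusOne α β 0 / 2 : ℝ) : ℂ) • plusOneBasis 0
      + ((aPlus 0 / 2 : ℝ) : ℂ) • plusOneBasis 1 := by
  have h := congrArg (fun r : ℝ => (r : ℂ)) (neg_one_pow_mul_aPlus_mul_plusOneCoeff_succ 0)
  push_cast at h
  simp only [plusOneBasis, Qact_smul, Qact_plusOneKet_zero]
  push_cast
  linear_combination (norm := module) (1 / 2 * h) • plusOneKet 1

theorem Qact_plusOneBasis_succ (α β : ℝ) (k : ℕ) :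
    Qact α β (plusOneBasis (k + 1)) = ((aPlus k / 2 : ℝ) : ℂ) • plusOneBasis k
      + ((bPlusOne α β (k + 1) / 2 : ℝ) : ℂ) • plusOneBasis (k + 1)
      + ((aPlus (k + 1) / 2 : ℝ) : ℂ) • plusOneBasis (k + 2) := by
  have h₀ := congrArg (fun r : ℝ => (r : ℂ)) (neg_one_pow_mul_aPlus_mul_plusOneCoeff_succ k)
  have h₁ := congrArg (fun r : ℝ => (r : ℂ)) (neg_one_pow_mul_aPlus_mul_plusOneCoeff_succ (k + 1))
  have hsq := congrArg (fun r : ℝ => (r : ℂ)) (aPlus_sq k)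
  have hsign : ((-1 : ℂ) ^ k) ^ 2 = 1 := by rw [← pow_mul, mul_comm, pow_mul]; simp
  push_cast at h₀ h₁ hsq
  simp only [plusOneBasis, Qact_smul, Qact_plusOneKet_succ]
  push_cast
  linear_combination (norm := module)
    (aPlus k / 2 * h₀ - plusOneCoeff (k + 1) * (-1) ^ (k + 1) / 2 * hsq) • plusOneKet k
      + ((-1) ^ (k + 1) / 2 * h₁ + aPlus (k + 1) * plusOneCoeff (k + 2) / 2 * hsign)
        • plusOneKet (k + 2)

theorem Q_plus_one_jacobi_representation_general (α β : ℝ) :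
    ∃ f : ℕ → ((ℝ → ℂ) × (ℝ → ℂ)),
      (∀ k, f k ∈ Submodule.span ℂ SplusOne) ∧
      (∀ j k, (∫ x : ℝ, (starRingEnd ℂ) ((f j).1 x) * (f k).1 x
          + (starRingEnd ℂ) ((f j).2 x) * (f k).2 x) = if j = k then 1 else 0) ∧
      Submodule.span ℂ (Set.range f) = Submodule.span ℂ SplusOne ∧
      (Qact α β (f 0) = ((bPlusOne α β 0 / 2 : ℝ) : ℂ) • f 0
          + ((aPlus 0 / 2 : ℝ) : ℂ) • f 1) ∧
      (∀ k, Qact α β (f (k + 1)) = ((aPlus k / 2 : ℝ) : ℂ) • f k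
          + ((bPlusOne α β (k + 1) / 2 : ℝ) : ℂ) • f (k + 1)
          + ((aPlus (k + 1) / 2 : ℝ) : ℂ) • f (k + 2)) :=
  ⟨plusOneBasis, fun k => span_range_plusOneBasis ▸ Submodule.subset_span ⟨k, rfl⟩,
    integral_plusOneBasis, span_range_plusOneBasis, Qact_plusOneBasis_zero α β,
    Qact_plusOneBasis_succ α β⟩

/-- The restriction `Q_{+1}` of `Q(α,β)` to `H_{+1}` is unitarily equivalent to the
Jacobi matrix `Q̂_{+1}`: there is an orthonormal basis of `H_{+1}` in which `Q` acts
as the Jacobi matrix with diagonal `b_{+1}(n)/2` and off-diagonal `a_+(n)/2`. -/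
theorem Q_plus_one_jacobi_representation (α β : ℝ) (hα : 0 < α) (hβ : 0 < β)
    (hαβ : 1 < α * β) :
    ∃ f : ℕ → ((ℝ → ℂ) × (ℝ → ℂ)),
      (∀ k, f k ∈ Submodule.span ℂ SplusOne) ∧
      (∀ j k, (∫ x : ℝ, (starRingEnd ℂ) ((f j).1 x) * (f k).1 x
          + (starRingEnd ℂ) ((f j).2 x) * (f k).2 x) = if j = k then 1 else 0) ∧
      Submodule.span ℂ (Set.range f) = Submodule.span ℂ SplusOne ∧
      (Qact α β (f 0) = ((bPlusOne α β 0 / 2 : ℝ) : ℂ) • f 0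
          + ((aPlus 0 / 2 : ℝ) : ℂ) • f 1) ∧
      (∀ k, Qact α β (f (k + 1)) = ((aPlus k / 2 : ℝ) : ℂ) • f k
          + ((bPlusOne α β (k + 1) / 2 : ℝ) : ℂ) • f (k + 1)
          + ((aPlus (k + 1) / 2 : ℝ) : ℂ) • f (k + 2)) :=
  Q_plus_one_jacobi_representation_general α β
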